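/- Evolution of the discrete total momentum (semi-discrete CPIC in 3D): under the same hypotheses — w_p ≥ 0, trajectories satisfying v̇_p = E_p + v_p × B_p − U_p with U_p = Σ_q w_q ψ(x_p − x_q) A(v_p − v_q) b_{p,q}, ψ even, b_{q,p} = −b_{p,q} — the collisional forces exert no net effect: d/dt Σ_p w_p v_p = Σ_p w_p (E_p + v_p × B_p). -/

import Mathlib

open Matrix
open scoped Classical

/-- The Landau collision kernel `A(z) = C ‖z‖^(γ+2) (I − z zᵀ/‖z‖²)` for `z ≠ 0`,
with the convention `A(0) = 0`. -/
noncomputable def landauA (d : ℕ) (C γ : ℝ) (z : Fin d → ℝ) :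
    Matrix (Fin d) (Fin d) ℝ :=
  if z = 0 then 0
  else (C * Real.sqrt (z ⬝ᵥ z) ^ (γ + 2)) •
    (1 - (z ⬝ᵥ z)⁻¹ • Matrix.vecMulVec z z)

/-! The collision term of particle `p` is `w_p Σ_q w_q ψ(x_p − x_q) A(v_p − v_q) b_{p,q}`; since
`ψ` and `A` are even and `b` is antisymmetric, the summand is antisymmetric in `(p, q)`, so the
double sum vanishes and only the Lorentz forces change the total momentum. -/

theorem Finset.sum_sum_eq_zero_of_antisymm {ι M : Type*} [AddCommGroup M] [IsAddTorsionFree M]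
    (s : Finset ι) {f : ι → ι → M} (hf : ∀ i j, f j i = -f i j) :
    ∑ i ∈ s, ∑ j ∈ s, f i j = 0 := by
  rw [← self_eq_neg, ← Finset.sum_neg_distrib, Finset.sum_comm]
  refine Finset.sum_congr rfl fun i _ => ?_
  rw [← Finset.sum_neg_distrib]
  exact Finset.sum_congr rfl fun j _ => hf i j

theorem landauA_neg (d : ℕ) (C γ : ℝ) (z : Fin d → ℝ) :
    landauA d C γ (-z) = landauA d C γ z := by
  simp only [landauA, neg_eq_zero, neg_dotProduct_neg, vecMulVec_neg, neg_vecMulVec, neg_neg]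

theorem sum_smul_sum_collision_eq_zero {ι : Type*} [Fintype ι] {d : ℕ}
    {A : (Fin d → ℝ) → Matrix (Fin d) (Fin d) ℝ} (hA : ∀ z, A (-z) = A z)
    {ψ : (Fin d → ℝ) → ℝ} (hψ : ∀ y, ψ (-y) = ψ y)
    {b : ι → ι → Fin d → ℝ} (hb : ∀ p q, b q p = -b p q) (w : ι → ℝ) (x v : ι → Fin d → ℝ) :
    ∑ p, w p • ∑ q, (w q * ψ (x p - x q)) • A (v p - v q) *ᵥ b p q = 0 := by
  simp only [Finset.smul_sum]
  refine Finset.sum_sum_eq_zero_of_antisymm _ fun p q => ?_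
  rw [← neg_sub (x p), ← neg_sub (v p), hψ, hA, hb, mulVec_neg, smul_neg, smul_neg, smul_smul,
    smul_smul, mul_left_comm]

theorem cpic_momentum_evolution_general {N : ℕ} (C γ : ℝ)
    (w : Fin N → ℝ)
    (x : Fin N → ℝ → Fin 3 → ℝ) (v : Fin N → ℝ → Fin 3 → ℝ)
    (ψ : (Fin 3 → ℝ) → ℝ) (hψ : ∀ y, ψ (-y) = ψ y)
    (b : Fin N → Fin N → ℝ → Fin 3 → ℝ) (hb : ∀ p q t, b q p t = -(b p q t))
    (U : Fin N → ℝ → Fin 3 → ℝ)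
    (hU : ∀ p t, U p t = ∑ q : Fin N,
      (w q * ψ (x p t - x q t)) • (landauA 3 C γ (v p t - v q t)).mulVec (b p q t))
    (E : Fin N → ℝ → Fin 3 → ℝ) (B : Fin N → ℝ → Fin 3 → ℝ)
    (hv : ∀ p t, HasDerivAt (v p)
      (E p t + crossProduct (v p t) (B p t) - U p t) t)
    (t : ℝ) :
    HasDerivAt (fun s => ∑ p : Fin N, w p • v p s)
      (∑ p : Fin N, w p • (E p t + crossProduct (v p t) (B p t))) t := by
  have hmomentum : ∑ p, w p • U p t = 0 := by
    simpa only [hU] using sum_smul_sum_collision_eq_zero (landauA_neg 3 C γ) hψ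
      (fun p q => hb p q t) w (fun p => x p t) (fun p => v p t)
  have hderiv := HasDerivAt.fun_sum fun p (_ : p ∈ Finset.univ) => (hv p t).fun_const_smul (w p)
  simpa only [smul_sub, Finset.sum_sub_distrib, hmomentum, sub_zero] using hderiv

/-- Evolution of the discrete total momentum (semi-discrete CPIC in 3D): if the
particle velocities satisfy `v̇_p = E_p + v_p × B_p − U_p`, with `U_p` the discrete
Landau collision field (`ψ` even, `b_{q,p} = −b_{p,q}`), then the collisional forces
exert no net effect: `d/dt Σ_p w_p v_p = Σ_p w_p (E_p + v_p × B_p)`. -/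
theorem cpic_momentum_evolution {N : ℕ} (C γ : ℝ) (hC : 0 < C)
    (w : Fin N → ℝ) (hw : ∀ p, 0 ≤ w p)
    (x : Fin N → ℝ → Fin 3 → ℝ) (v : Fin N → ℝ → Fin 3 → ℝ)
    (ψ : (Fin 3 → ℝ) → ℝ) (hψ : ∀ y, ψ (-y) = ψ y)
    (b : Fin N → Fin N → ℝ → Fin 3 → ℝ) (hb : ∀ p q t, b q p t = -(b p q t))
    (U : Fin N → ℝ → Fin 3 → ℝ)
    (hU : ∀ p t, U p t = ∑ q : Fin N,
      (w q * ψ (x p t - x q t)) • (landauA 3 C γ (v p t - v q t)).mulVec (b p q t))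
    (E : Fin N → ℝ → Fin 3 → ℝ) (B : Fin N → ℝ → Fin 3 → ℝ)
    (hv : ∀ p t, HasDerivAt (v p)
      (E p t + crossProduct (v p t) (B p t) - U p t) t)
    (t : ℝ) :
    HasDerivAt (fun s => ∑ p : Fin N, w p • v p s)
      (∑ p : Fin N, w p • (E p t + crossProduct (v p t) (B p t))) t :=
  cpic_momentum_evolution_general C γ w x v ψ hψ b hb U hU E B hv t
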